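/- Suppose either (I) 3/4 < p < 1 and ℓ_inf(α) > 1/(4p−2), or (II) p = 1, 1/(4p−2) < ℓ_inf(α) ≤ ℓ_sup(α) < 1 and 0 < ℓ_inf(β) ≤ ℓ_sup(β) < (1−ℓ_sup(α))/(1−ℓ_inf(α)). Then for every ε > 0, (1/s_n²) Σ_{k=n}^∞ E[Y_k² · 1_{|Y_k| > ε s_n}] → 0 as n → ∞. -/

import Mathlib

open MeasureTheory ProbabilityTheory Filter

noncomputable section

/-- The increments `X_n := S_n - S_{n-1}` of the walk. -/
def derwX {Ω : Type*} (S : ℕ → Ω → ℝ) (n : ℕ) (ω : Ω) : ℝ := S n ω - S (n - 1) ω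

/-- The natural filtration `F_n^X = σ(X_1, …, X_n)` of the increments. -/
def derwF {Ω : Type*} (S : ℕ → Ω → ℝ) (n : ℕ) : MeasurableSpace Ω :=
  ⨆ k ∈ Finset.Icc 1 n, MeasurableSpace.comap (derwX S k) Real.measurableSpace

/-- The dynamic elephant random walk (DERW) with parameters `p, q ∈ [0,1]` and
sequences `α, β` in `[0,1]` (indexed from 1). -/
structure IsDERW {Ω : Type*} [MeasurableSpace Ω] (μ : Measure Ω)
    (p q : ℝ) (α β : ℕ → ℝ) (S : ℕ → Ω → ℝ) : Prop where
  hp : p ∈ Set.Icc (0 : ℝ) 1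
  hq : q ∈ Set.Icc (0 : ℝ) 1
  hα : ∀ n, α n ∈ Set.Icc (0 : ℝ) 1
  hβ : ∀ n, β n ∈ Set.Icc (0 : ℝ) 1
  hS0 : ∀ ω, S 0 ω = 0
  hmeas : ∀ n, Measurable (derwX S n)
  hpm : ∀ n, 1 ≤ n → ∀ ω, derwX S n ω = 1 ∨ derwX S n ω = -1
  hE1 : ∫ ω, derwX S 1 ω ∂μ = α 1 * (2 * q - 1) + (1 - α 1) * (2 * β 1 - 1)
  hCE : ∀ n, 1 ≤ n → μ[derwX S (n + 1) | derwF S n]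
      =ᵐ[μ] fun ω => α (n + 1) * (2 * p - 1) / (n : ℝ) * S n ω
        + (1 - α (n + 1)) * (2 * β (n + 1) - 1)

/-- `a_n := ∏_{k=1}^{n-1} (1 + (2p-1) α_{k+1} / k)`, with `a_1 = 1`. -/
def derwa (p : ℝ) (α : ℕ → ℝ) (n : ℕ) : ℝ :=
  ∏ k ∈ Finset.Ico 1 n, (1 + (2 * p - 1) * α (k + 1) / (k : ℝ))

/-- `A_n² := ∑_{k=1}^n (1 - E[X_k]²) / a_k²`. -/
def derwAsq {Ω : Type*} [MeasurableSpace Ω] (μ : Measure Ω) (p : ℝ) (α : ℕ → ℝ)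
    (S : ℕ → Ω → ℝ) (n : ℕ) : ℝ :=
  ∑ k ∈ Finset.Icc 1 n, (1 - (∫ ω, derwX S k ω ∂μ) ^ 2) / derwa p α k ^ 2

/-- `A_∞² := ∑_{k=1}^∞ (1 - E[X_k]²) / a_k²`. -/
def derwAsqInf {Ω : Type*} [MeasurableSpace Ω] (μ : Measure Ω) (p : ℝ) (α : ℕ → ℝ)
    (S : ℕ → Ω → ℝ) : ℝ :=
  ∑' k : ℕ, (1 - (∫ ω, derwX S (k + 1) ω ∂μ) ^ 2) / derwa p α (k + 1) ^ 2

/-- The martingale `M_n := (S_n - E[S_n]) / a_n` (note `M_0 = 0` since `S_0 = 0`). -/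
def derwM {Ω : Type*} [MeasurableSpace Ω] (μ : Measure Ω) (p : ℝ) (α : ℕ → ℝ)
    (S : ℕ → Ω → ℝ) (n : ℕ) (ω : Ω) : ℝ :=
  (S n ω - ∫ ω', S n ω' ∂μ) / derwa p α n

/-- The martingale differences `Y_n := M_n - M_{n-1}`. -/
def derwY {Ω : Type*} [MeasurableSpace Ω] (μ : Measure Ω) (p : ℝ) (α : ℕ → ℝ)
    (S : ℕ → Ω → ℝ) (n : ℕ) (ω : Ω) : ℝ :=
  derwM μ p α S n ω - derwM μ p α S (n - 1) ω

/-- `s_n² := ∑_{k=n}^∞ E[Y_k²]`. -/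
def derwssq {Ω : Type*} [MeasurableSpace Ω] (μ : Measure Ω) (p : ℝ) (α : ℕ → ℝ)
    (S : ℕ → Ω → ℝ) (n : ℕ) : ℝ :=
  ∑' k : ℕ, ∫ ω, derwY μ p α S (n + k) ω ^ 2 ∂μ


/-!
For `p ≥ 1/2` the normalisation `a_n` is nondecreasing and at most linear in `n`, and
`Y_{n+1} = (X_{n+1} - E[X_{n+1} | F_n]) / a_{n+1}`, so `|Y_k| ≤ 2 / a_n` for all `k ≥ n`.
Under either hypothesis the conditional drift eventually stays at distance `c > 0` from `±1`;
as `|X_k| = 1` this gives `E[Y_k²] ≥ c² / a_k² ≥ c² / (4 a_n²)` for `n ≤ k ≤ 2n`, hence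
`s_n² ≥ n c² / (4 a_n²)`. The tail `s_n²` is finite because `a_n ≳ n^θ` with
`θ = (2p - 1) liminf α > 1/2`. So `sup_{k ≥ n} |Y_k| = o(s_n)` and the Lindeberg sets
`{|Y_k| > ε s_n}` are eventually empty.
-/

theorem tendsto_lindeberg_ratio_of_abs_le {Ω : Type*} [MeasurableSpace Ω] (μ : Measure Ω)
    {Y : ℕ → Ω → ℝ} {s b : ℕ → ℝ} (hY : ∀ᶠ n in atTop, ∀ k ω, |Y (n + k) ω| ≤ b n)
    (hs : Tendsto (fun n => s n / b n ^ 2) atTop atTop) {ε : ℝ} (hε : 0 < ε) :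
    Tendsto (fun n => (∑' k : ℕ, ∫ ω in {ω | ε * Real.sqrt (s n) < |Y (n + k) ω|},
      Y (n + k) ω ^ 2 ∂μ) / s n) atTop (nhds 0) := by
  refine tendsto_const_nhds.congr' ?_
  filter_upwards [hY, hs.eventually_gt_atTop (ε ^ 2)⁻¹] with n hYn hsn
  have hb2 : 0 < b n ^ 2 := by
    refine (sq_nonneg _).lt_of_ne fun h0 => ?_
    rw [← h0, div_zero] at hsn
    exact (inv_pos.2 (pow_pos hε 2)).not_gt hsn
  have hs0 : 0 < s n := (div_pos_iff_of_pos_right hb2).1 ((inv_pos.2 (pow_pos hε 2)).trans hsn)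
  have hb : b n < ε * Real.sqrt (s n) := by
    have hsq : b n ^ 2 < (ε * Real.sqrt (s n)) ^ 2 := by
      rw [mul_pow, Real.sq_sqrt hs0.le]
      calc b n ^ 2 = ε ^ 2 * ((ε ^ 2)⁻¹ * b n ^ 2) := by field_simp
        _ < ε ^ 2 * s n := mul_lt_mul_of_pos_left ((lt_div_iff₀ hb2).1 hsn) (by positivity)
    exact (le_abs_self _).trans_lt (abs_lt_of_sq_lt_sq hsq (by positivity))
  have hempty : ∀ k, {ω | ε * Real.sqrt (s n) < |Y (n + k) ω|} = ∅ := fun k =>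
    Set.eq_empty_of_forall_notMem fun ω hω => (hYn k ω).not_gt (hb.trans hω)
  simp [hempty]

section Normalization

variable {p : ℝ} {α : ℕ → ℝ}

theorem derwa_succ {n : ℕ} (hn : 1 ≤ n) :
    derwa p α (n + 1) = derwa p α n * (1 + (2 * p - 1) * α (n + 1) / n) :=
  Finset.prod_Ico_succ_top hn _

theorem one_le_derwa_factor (hp : 1 / 2 ≤ p) (hα : ∀ n, 0 ≤ α n) (k : ℕ) :
    1 ≤ 1 + (2 * p - 1) * α (k + 1) / k :=
  le_add_of_nonneg_right (div_nonneg (mul_nonneg (by linarith) (hα _)) k.cast_nonneg)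

theorem one_le_derwa (hp : 1 / 2 ≤ p) (hα : ∀ n, 0 ≤ α n) (n : ℕ) : 1 ≤ derwa p α n :=
  Finset.one_le_prod fun k _ => one_le_derwa_factor hp hα k

theorem derwa_pos (hp : 1 / 2 ≤ p) (hα : ∀ n, 0 ≤ α n) (n : ℕ) : 0 < derwa p α n :=
  one_pos.trans_le (one_le_derwa hp hα n)

theorem derwa_mono (hp : 1 / 2 ≤ p) (hα : ∀ n, 0 ≤ α n) : Monotone (derwa p α) := by
  refine monotone_nat_of_le_succ fun n => ?_
  rcases Nat.eq_zero_or_pos n with rfl | hn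
  · simp [derwa]
  · rw [derwa_succ hn]
    exact le_mul_of_one_le_right (derwa_pos hp hα n).le (one_le_derwa_factor hp hα n)

/-- Each factor of `a` is at most `1 + 1/k`. -/
theorem derwa_mul_le (hp : 1 / 2 ≤ p) (hp1 : p ≤ 1) (hα : ∀ n, α n ∈ Set.Icc 0 1)
    {n m : ℕ} (hn : 1 ≤ n) (hnm : n ≤ m) :
    derwa p α m * n ≤ derwa p α n * m := by
  induction m, hnm using Nat.le_induction with
  | base => rfl
  | succ m hnm ih =>
    have hm : (0 : ℝ) < m := by exact_mod_cast hn.trans hnm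
    have hfactor : (2 * p - 1) * α (m + 1) ≤ 1 := by
      nlinarith [(hα (m + 1)).1, (hα (m + 1)).2]
    have hgrowth : derwa p α (m + 1) * m ≤ derwa p α m * (m + 1) := by
      rw [derwa_succ (hn.trans hnm), mul_assoc, add_mul, div_mul_cancel₀ _ hm.ne', one_mul]
      gcongr
      exact (derwa_pos hp (fun k => (hα k).1) m).le
    push_cast
    nlinarith [derwa_pos hp (fun k => (hα k).1) (m + 1)]

theorem derwa_mul_rpow_le (hp : 1 / 2 ≤ p) (hα : ∀ n, 0 ≤ α n) {ℓ : ℝ} (hℓ : 0 ≤ ℓ)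
    (hθ : (2 * p - 1) * ℓ ≤ 1) {N : ℕ} (hN : 1 ≤ N) (hℓα : ∀ k, N ≤ k → ℓ ≤ α k)
    {n : ℕ} (hn : N ≤ n) :
    derwa p α N * ((n : ℝ) / N) ^ ((2 * p - 1) * ℓ) ≤ derwa p α n := by
  set θ := (2 * p - 1) * ℓ
  induction n, hn using Nat.le_induction with
  | base => simp [div_self (show (N : ℝ) ≠ 0 by positivity)]
  | succ n hNn ih =>
    have hn : (0 : ℝ) < n := by exact_mod_cast hN.trans hNn
    have hbernoulli : (1 + 1 / (n : ℝ)) ^ θ ≤ 1 + (2 * p - 1) * α (n + 1) / n := by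
      calc (1 + 1 / (n : ℝ)) ^ θ ≤ 1 + θ * (1 / n) :=
            rpow_one_add_le_one_add_mul_self (by linarith [one_div_pos.2 hn])
              (mul_nonneg (by linarith) hℓ) hθ
        _ ≤ 1 + (2 * p - 1) * α (n + 1) / n := by
            have : θ ≤ (2 * p - 1) * α (n + 1) :=
              mul_le_mul_of_nonneg_left (hℓα _ (by omega)) (by linarith)
            rw [mul_one_div]
            gcongr
    calc derwa p α N * (((n + 1 : ℕ) : ℝ) / N) ^ θ
        = derwa p α N * ((n : ℝ) / N) ^ θ * (1 + 1 / (n : ℝ)) ^ θ := by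
          rw [mul_assoc, ← Real.mul_rpow (by positivity) (by positivity)]
          congr 2
          field_simp
          push_cast
          ring
      _ ≤ derwa p α n * (1 + (2 * p - 1) * α (n + 1) / n) :=
          mul_le_mul ih hbernoulli (by positivity) (derwa_pos hp hα n).le
      _ = derwa p α (n + 1) := (derwa_succ (hN.trans hNn)).symm

theorem summable_inv_derwa_sq (hp : 1 / 2 ≤ p) (hp1 : p ≤ 1) (hα : ∀ n, α n ∈ Set.Icc 0 1)
    {ℓ : ℝ} (hθ : 1 / 2 < (2 * p - 1) * ℓ) (hℓα : ∀ᶠ k in atTop, ℓ ≤ α k) :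
    Summable fun n => (derwa p α n ^ 2)⁻¹ := by
  obtain ⟨N, hN⟩ := eventually_atTop.1 (hℓα.and (eventually_ge_atTop 1))
  have hℓ : 0 ≤ ℓ := by nlinarith
  have hθ1 : (2 * p - 1) * ℓ ≤ 1 := by nlinarith [(hN N le_rfl).1, (hα N).2]
  set θ := (2 * p - 1) * ℓ
  have hN0 : (0 : ℝ) < N := by exact_mod_cast (hN N le_rfl).2
  set C := derwa p α N / (N : ℝ) ^ θ
  have hC : 0 < C := div_pos (derwa_pos hp (fun k => (hα k).1) N) (by positivity)
  refine Summable.of_norm_bounded_eventually_nat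
    ((Real.summable_nat_rpow_inv.2 (by linarith : 1 < 2 * θ)).mul_left (C ^ 2)⁻¹) ?_
  filter_upwards [eventually_ge_atTop N] with n hn
  have hn0 : (0 : ℝ) < n := hN0.trans_le (by exact_mod_cast hn)
  have hgrowth : C * (n : ℝ) ^ θ ≤ derwa p α n :=
    calc C * (n : ℝ) ^ θ = derwa p α N * ((n : ℝ) / N) ^ θ := by
          rw [Real.div_rpow hn0.le hN0.le]
          ring
      _ ≤ derwa p α n := derwa_mul_rpow_le hp (fun k => (hα k).1) hℓ hθ1 (hN N le_rfl).2
          (fun k hk => (hN k hk).1) hn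
  rw [Real.norm_of_nonneg (by positivity), ← mul_inv]
  refine inv_anti₀ (by positivity) ?_
  calc C ^ 2 * (n : ℝ) ^ (2 * θ) = (C * (n : ℝ) ^ θ) ^ 2 := by
        rw [mul_pow, mul_comm 2 θ, Real.rpow_mul hn0.le]
        norm_cast
    _ ≤ derwa p α n ^ 2 := pow_le_pow_left₀ (by positivity) hgrowth 2

end Normalization

/-- The conditional mean `E[X_{n+1} | F_n^X]` prescribed by `IsDERW.hCE`. -/
def derwDrift {Ω : Type*} (p : ℝ) (α β : ℕ → ℝ) (S : ℕ → Ω → ℝ) (n : ℕ) (ω : Ω) : ℝ :=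
  α (n + 1) * (2 * p - 1) / n * S n ω + (1 - α (n + 1)) * (2 * β (n + 1) - 1)

def derwDriftBound (p : ℝ) (α β : ℕ → ℝ) (m : ℕ) : ℝ :=
  (2 * p - 1) * α m + (1 - α m) * |2 * β m - 1|

theorem derwDriftBound_le {p : ℝ} {α β : ℕ → ℝ} (hα : ∀ n, α n ∈ Set.Icc 0 1)
    (hβ : ∀ n, β n ∈ Set.Icc 0 1) (m : ℕ) : derwDriftBound p α β m ≤ 1 - 2 * (1 - p) * α m := by
  have hβ' : |2 * β m - 1| ≤ 1 := abs_le.2 ⟨by linarith [(hβ m).1], by linarith [(hβ m).2]⟩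
  have := mul_le_mul_of_nonneg_left hβ' (sub_nonneg.2 (hα m).2)
  unfold derwDriftBound
  linarith

theorem derwDriftBound_le_one {p : ℝ} {α β : ℕ → ℝ} (hp1 : p ≤ 1) (hα : ∀ n, α n ∈ Set.Icc 0 1)
    (hβ : ∀ n, β n ∈ Set.Icc 0 1) (m : ℕ) : derwDriftBound p α β m ≤ 1 := by
  nlinarith [derwDriftBound_le (p := p) hα hβ m, (hα m).1]

theorem self_add_derwX_succ {Ω : Type*} (S : ℕ → Ω → ℝ) (n : ℕ) :
    S n + derwX S (n + 1) = S (n + 1) :=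
  funext fun ω => by simp [derwX]

namespace IsDERW

variable {Ω : Type*} [MeasurableSpace Ω] {μ : Measure Ω} {p q : ℝ} {α β : ℕ → ℝ}
  {S : ℕ → Ω → ℝ}

theorem derwa_pos (h : IsDERW μ p q α β S) (hp : 1 / 2 ≤ p) (n : ℕ) : 0 < derwa p α n :=
  _root_.derwa_pos hp (fun k => (h.hα k).1) n

theorem measurable_S (h : IsDERW μ p q α β S) : ∀ n, Measurable (S n)
  | 0 => by simp [funext h.hS0]
  | n + 1 => by
    rw [← self_add_derwX_succ S n]
    exact (h.measurable_S n).add (h.hmeas (n + 1))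

theorem abs_derwX_le (h : IsDERW μ p q α β S) (n : ℕ) (ω : Ω) : |derwX S n ω| ≤ 1 := by
  rcases Nat.eq_zero_or_pos n with rfl | hn
  · simp [derwX]
  · rcases h.hpm n hn ω with hX | hX <;> simp [hX]

theorem abs_S_le (h : IsDERW μ p q α β S) : ∀ n ω, |S n ω| ≤ n
  | 0, ω => by simp [h.hS0 ω]
  | n + 1, ω => by
    rw [← self_add_derwX_succ S n, Pi.add_apply]
    push_cast
    exact (abs_add_le _ _).trans (add_le_add (h.abs_S_le n ω) (h.abs_derwX_le _ ω))

theorem integrable_S [IsFiniteMeasure μ] (h : IsDERW μ p q α β S) (n : ℕ) :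
    Integrable (S n) μ :=
  .of_bound (h.measurable_S n).aestronglyMeasurable n (ae_of_all _ (h.abs_S_le n))

theorem integrable_derwX [IsFiniteMeasure μ] (h : IsDERW μ p q α β S) (n : ℕ) :
    Integrable (derwX S n) μ :=
  .of_bound (h.hmeas n).aestronglyMeasurable 1 (ae_of_all _ (h.abs_derwX_le n))

theorem integral_S_succ [IsProbabilityMeasure μ] (h : IsDERW μ p q α β S) {n : ℕ} (hn : 1 ≤ n) :
    ∫ ω, S (n + 1) ω ∂μ = (1 + (2 * p - 1) * α (n + 1) / n) * ∫ ω, S n ω ∂μ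
      + (1 - α (n + 1)) * (2 * β (n + 1) - 1) := by
  have hF : derwF S n ≤ ‹MeasurableSpace Ω› :=
    iSup₂_le fun k _ => (h.hmeas k).comap_le
  have hX : ∫ ω, derwX S (n + 1) ω ∂μ = ∫ ω, α (n + 1) * (2 * p - 1) / n * S n ω
      + (1 - α (n + 1)) * (2 * β (n + 1) - 1) ∂μ := by
    rw [← integral_condExp hF]
    exact integral_congr_ae (h.hCE n hn)
  rw [← self_add_derwX_succ S n, integral_add' (h.integrable_S n) (h.integrable_derwX _), hX,
    integral_add ((h.integrable_S n).const_mul _) (integrable_const _), integral_const_mul,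
    integral_const]
  simp only [probReal_univ, one_smul]
  ring

theorem derwY_succ [IsProbabilityMeasure μ] (h : IsDERW μ p q α β S) (hp : 1 / 2 ≤ p)
    {n : ℕ} (hn : 1 ≤ n) (ω : Ω) :
    derwY μ p α S (n + 1) ω = (derwX S (n + 1) ω - derwDrift p α β S n ω) / derwa p α (n + 1) := by
  have ha := h.derwa_pos hp n
  have hf : 0 < 1 + (2 * p - 1) * α (n + 1) / n := by
    linarith [one_le_derwa_factor hp (fun k => (h.hα k).1) n]
  rw [derwY, derwM, derwM, Nat.add_sub_cancel, h.integral_S_succ hn, derwa_succ hn,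
    ← self_add_derwX_succ S n, Pi.add_apply, derwDrift, div_sub_div _ _ (mul_pos ha hf).ne' ha.ne',
    div_eq_div_iff (mul_pos (mul_pos ha hf) ha).ne' (mul_pos ha hf).ne']
  ring

theorem abs_derwDrift_le (h : IsDERW μ p q α β S) (hp : 1 / 2 ≤ p) {n : ℕ} (hn : 1 ≤ n) (ω : Ω) :
    |derwDrift p α β S n ω| ≤ derwDriftBound p α β (n + 1) := by
  have hn' : (0 : ℝ) < n := by exact_mod_cast hn
  have hcoef : 0 ≤ α (n + 1) * (2 * p - 1) / n :=
    div_nonneg (mul_nonneg (h.hα _).1 (by linarith)) hn'.le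
  have hS : |α (n + 1) * (2 * p - 1) / n * S n ω| ≤ (2 * p - 1) * α (n + 1) := by
    rw [abs_mul, abs_of_nonneg hcoef]
    calc α (n + 1) * (2 * p - 1) / n * |S n ω| ≤ α (n + 1) * (2 * p - 1) / n * n := by
          gcongr
          exact h.abs_S_le n ω
      _ = (2 * p - 1) * α (n + 1) := by field_simp
  have hconst : |(1 - α (n + 1)) * (2 * β (n + 1) - 1)|
      = (1 - α (n + 1)) * |2 * β (n + 1) - 1| := by
    rw [abs_mul, abs_of_nonneg (sub_nonneg.2 (h.hα _).2)]
  exact (abs_add_le _ _).trans (by rw [hconst, derwDriftBound]; linarith)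

theorem measurable_derwY (h : IsDERW μ p q α β S) (n : ℕ) : Measurable (derwY μ p α S n) := by
  have hM : ∀ m, Measurable (derwM μ p α S m) := fun m =>
    ((h.measurable_S m).sub_const _).div_const _
  exact (hM n).sub (hM (n - 1))

theorem abs_derwY_succ_le [IsProbabilityMeasure μ] (h : IsDERW μ p q α β S) (hp : 1 / 2 ≤ p)
    {n : ℕ} (hn : 1 ≤ n) (ω : Ω) : |derwY μ p α S (n + 1) ω| ≤ 2 / derwa p α (n + 1) := by
  have ha := h.derwa_pos hp (n + 1)
  rw [h.derwY_succ hp hn, abs_div, abs_of_pos ha]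
  refine div_le_div_of_nonneg_right ?_ ha.le
  calc |derwX S (n + 1) ω - derwDrift p α β S n ω|
      ≤ |derwX S (n + 1) ω| + |derwDrift p α β S n ω| := abs_sub _ _
    _ ≤ 1 + 1 := add_le_add (h.abs_derwX_le _ ω)
        ((h.abs_derwDrift_le hp hn ω).trans (derwDriftBound_le_one h.hp.2 h.hα h.hβ _))
    _ = 2 := by norm_num

theorem integrable_derwY_succ_sq [IsProbabilityMeasure μ] (h : IsDERW μ p q α β S)
    (hp : 1 / 2 ≤ p) {n : ℕ} (hn : 1 ≤ n) :
    Integrable (fun ω => derwY μ p α S (n + 1) ω ^ 2) μ :=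
  .of_bound ((h.measurable_derwY _).pow_const 2).aestronglyMeasurable ((2 / derwa p α (n + 1)) ^ 2)
    (ae_of_all _ fun ω => by
      rw [Real.norm_eq_abs, abs_pow]
      exact pow_le_pow_left₀ (abs_nonneg _) (h.abs_derwY_succ_le hp hn ω) 2)

theorem integral_derwY_succ_sq_le [IsProbabilityMeasure μ] (h : IsDERW μ p q α β S)
    (hp : 1 / 2 ≤ p) {n : ℕ} (hn : 1 ≤ n) :
    ∫ ω, derwY μ p α S (n + 1) ω ^ 2 ∂μ ≤ (2 / derwa p α (n + 1)) ^ 2 := by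
  calc ∫ ω, derwY μ p α S (n + 1) ω ^ 2 ∂μ ≤ ∫ _, (2 / derwa p α (n + 1)) ^ 2 ∂μ :=
        integral_mono (h.integrable_derwY_succ_sq hp hn) (integrable_const _) fun ω => by
          rw [← sq_abs]
          exact pow_le_pow_left₀ (abs_nonneg _) (h.abs_derwY_succ_le hp hn ω) 2
    _ = (2 / derwa p α (n + 1)) ^ 2 := by simp

/-- `|X_{n+1}| = 1`, so `|X_{n+1} - E[X_{n+1} | F_n]| ≥ c`. -/
theorem sq_div_le_integral_derwY_succ_sq [IsProbabilityMeasure μ] (h : IsDERW μ p q α β S)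
    (hp : 1 / 2 ≤ p) {n : ℕ} (hn : 1 ≤ n) {c : ℝ} (hc : 0 ≤ c)
    (hgap : derwDriftBound p α β (n + 1) ≤ 1 - c) :
    (c / derwa p α (n + 1)) ^ 2 ≤ ∫ ω, derwY μ p α S (n + 1) ω ^ 2 ∂μ := by
  calc (c / derwa p α (n + 1)) ^ 2 = ∫ _, (c / derwa p α (n + 1)) ^ 2 ∂μ := by simp
    _ ≤ ∫ ω, derwY μ p α S (n + 1) ω ^ 2 ∂μ :=
        integral_mono (integrable_const _) (h.integrable_derwY_succ_sq hp hn) fun ω => ?_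
  have hX : |derwX S (n + 1) ω| = 1 := by
    rcases h.hpm (n + 1) (by omega) ω with hX | hX <;> simp [hX]
  have hdiff : c ≤ |derwX S (n + 1) ω - derwDrift p α β S n ω| := by
    linarith [abs_sub_abs_le_abs_sub (derwX S (n + 1) ω) (derwDrift p α β S n ω),
      h.abs_derwDrift_le hp hn ω]
  rw [h.derwY_succ hp hn, div_pow, div_pow]
  refine div_le_div_of_nonneg_right ?_ (sq_nonneg _)
  rw [← sq_abs (derwX S (n + 1) ω - _)]
  exact pow_le_pow_left₀ hc hdiff 2

theorem eventually_abs_derwY_le [IsProbabilityMeasure μ] (h : IsDERW μ p q α β S)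
    (hp : 1 / 2 ≤ p) : ∀ᶠ n in atTop, ∀ k ω, |derwY μ p α S (n + k) ω| ≤ 2 / derwa p α n := by
  filter_upwards [eventually_ge_atTop 2] with n hn k ω
  obtain ⟨j, hj⟩ : ∃ j, n + k = j + 1 := ⟨n + k - 1, by omega⟩
  rw [hj]
  refine (h.abs_derwY_succ_le hp (by omega) ω).trans ?_
  exact div_le_div_of_nonneg_left zero_le_two (h.derwa_pos hp n)
    (derwa_mono hp (fun k => (h.hα k).1) (by omega))

theorem summable_integral_derwY_sq [IsProbabilityMeasure μ] (h : IsDERW μ p q α β S)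
    (hp : 1 / 2 ≤ p) (hsum : Summable fun n => (derwa p α n ^ 2)⁻¹) :
    Summable fun n => ∫ ω, derwY μ p α S n ω ^ 2 ∂μ := by
  refine Summable.of_norm_bounded_eventually_nat (hsum.mul_left 4) ?_
  filter_upwards [eventually_ge_atTop 2] with n hn
  obtain ⟨j, rfl⟩ : ∃ j, n = j + 1 := ⟨n - 1, by omega⟩
  rw [Real.norm_of_nonneg (integral_nonneg fun ω => sq_nonneg _)]
  exact (h.integral_derwY_succ_sq_le hp (by omega)).trans_eq (by ring)

theorem le_derwssq [IsProbabilityMeasure μ] (h : IsDERW μ p q α β S) (hp : 1 / 2 ≤ p)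
    (hsum : Summable fun n => (derwa p α n ^ 2)⁻¹) {c : ℝ} (hc : 0 ≤ c) {n : ℕ} (hn : 2 ≤ n)
    (hgap : ∀ m, n ≤ m → derwDriftBound p α β m ≤ 1 - c) :
    (n + 1) * (c / (2 * derwa p α n)) ^ 2 ≤ derwssq μ p α S n := by
  have hterm : ∀ k ∈ Finset.range (n + 1),
      (c / (2 * derwa p α n)) ^ 2 ≤ ∫ ω, derwY μ p α S (n + k) ω ^ 2 ∂μ := by
    intro k hk
    have hk : k ≤ n := Finset.mem_range_succ_iff.1 hk
    obtain ⟨j, hj⟩ : ∃ j, n + k = j + 1 := ⟨n + k - 1, by omega⟩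
    have ha0 := h.derwa_pos hp (j + 1)
    have ha : derwa p α (j + 1) ≤ 2 * derwa p α n := by
      have hlin := derwa_mul_le hp h.hp.2 h.hα (by omega : 1 ≤ n) (by omega : n ≤ j + 1)
      have hj2 : ((j + 1 : ℕ) : ℝ) ≤ 2 * n := by exact_mod_cast (by omega : j + 1 ≤ 2 * n)
      have hn0 : (0 : ℝ) < n := by exact_mod_cast (by omega : 0 < n)
      nlinarith [h.derwa_pos hp n]
    rw [hj]
    refine le_trans ?_ (h.sq_div_le_integral_derwY_succ_sq hp (by omega) hc (hgap _ (by omega)))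
    exact pow_le_pow_left₀ (div_nonneg hc (by linarith)) (div_le_div_of_nonneg_left hc ha0 ha) 2
  calc (n + 1) * (c / (2 * derwa p α n)) ^ 2
      ≤ ∑ k ∈ Finset.range (n + 1), ∫ ω, derwY μ p α S (n + k) ω ^ 2 ∂μ := by
        simpa using Finset.sum_le_sum hterm
    _ ≤ derwssq μ p α S n :=
        Summable.sum_le_tsum _ (fun k _ => integral_nonneg fun ω => sq_nonneg _)
          (((summable_nat_add_iff n).2 (h.summable_integral_derwY_sq hp hsum)).congr
            fun k => by rw [add_comm])

theorem tendsto_derwssq_div_sq [IsProbabilityMeasure μ] (h : IsDERW μ p q α β S)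
    (hp : 1 / 2 ≤ p) (hsum : Summable fun n => (derwa p α n ^ 2)⁻¹) {c : ℝ} (hc : 0 < c)
    (hgap : ∀ᶠ m in atTop, derwDriftBound p α β m ≤ 1 - c) :
    Tendsto (fun n => derwssq μ p α S n / (2 / derwa p α n) ^ 2) atTop atTop := by
  obtain ⟨N, hN⟩ := eventually_atTop.1 hgap
  have hlin : Tendsto (fun n : ℕ => ((n : ℝ) + 1) * (c ^ 2 / 16)) atTop atTop :=
    (tendsto_natCast_atTop_atTop.atTop_add tendsto_const_nhds).atTop_mul_const (by positivity)
  refine tendsto_atTop_mono' _ ?_ hlin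
  filter_upwards [eventually_ge_atTop (max N 2)] with n hn
  have ha := h.derwa_pos hp n
  have hs := h.le_derwssq hp hsum hc.le (le_of_max_le_right hn)
    fun m hm => hN m ((le_of_max_le_left hn).trans hm)
  rw [le_div_iff₀ (by positivity)]
  refine le_of_eq_of_le ?_ hs
  field_simp
  ring

end IsDERW

theorem exists_eventually_derwDriftBound_le_of_lt_one {p : ℝ} {α β : ℕ → ℝ} (hp1 : p < 1)
    (hα : ∀ n, α n ∈ Set.Icc 0 1) (hβ : ∀ n, β n ∈ Set.Icc 0 1) (hαinf : 0 < liminf α atTop) :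
    ∃ c > 0, ∀ᶠ m in atTop, derwDriftBound p α β m ≤ 1 - c := by
  obtain ⟨ℓ, hℓ0, hℓ⟩ := exists_between hαinf
  refine ⟨2 * (1 - p) * ℓ, by nlinarith, ?_⟩
  filter_upwards [eventually_lt_of_lt_liminf hℓ (isBoundedUnder_of ⟨0, fun n => (hα n).1⟩)]
    with m hm
  nlinarith [derwDriftBound_le (p := p) hα hβ m]

theorem exists_eventually_derwDriftBound_le_of_limsup_lt_one {p : ℝ} {α β : ℕ → ℝ} (hp1 : p ≤ 1)
    (hα : ∀ n, α n ∈ Set.Icc 0 1) (hβ : ∀ n, β n ∈ Set.Icc 0 1) (hαsup : limsup α atTop < 1)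
    (hβinf : 0 < liminf β atTop) (hβsup : limsup β atTop < 1) :
    ∃ c > 0, ∀ᶠ m in atTop, derwDriftBound p α β m ≤ 1 - c := by
  obtain ⟨u, hαu, hu1⟩ := exists_between hαsup
  obtain ⟨b, hb0, hbβ⟩ := exists_between hβinf
  obtain ⟨v, hβv, hv1⟩ := exists_between hβsup
  set δ := min b (1 - v)
  have hδ : 0 < δ := lt_min hb0 (by linarith)
  refine ⟨2 * δ * (1 - u), by nlinarith, ?_⟩
  filter_upwards [eventually_lt_of_limsup_lt hαu (isBoundedUnder_of ⟨1, fun n => (hα n).2⟩),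
    eventually_lt_of_lt_liminf hbβ (isBoundedUnder_of ⟨0, fun n => (hβ n).1⟩),
    eventually_lt_of_limsup_lt hβv (isBoundedUnder_of ⟨1, fun n => (hβ n).2⟩)]
    with m hαm hβm hβm'
  have hβ' : |2 * β m - 1| ≤ 1 - 2 * δ :=
    abs_le.2 ⟨by linarith [min_le_left b (1 - v)], by linarith [min_le_right b (1 - v)]⟩
  have := mul_le_mul_of_nonneg_left hβ' (sub_nonneg.2 (hα m).2)
  unfold derwDriftBound
  nlinarith [(hα m).1, mul_nonneg (sub_nonneg.2 hp1) (hα m).1]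

variable {Ω : Type*} {m0 : MeasurableSpace Ω} (μ : Measure Ω) [IsProbabilityMeasure μ]
  (p q : ℝ) (α β : ℕ → ℝ) (S : ℕ → Ω → ℝ)

theorem derw_lindeberg (h : IsDERW μ p q α β S)
    (hcond : ((3 / 4 < p ∧ p < 1 ∧ 1 / (4 * p - 2) < liminf α atTop) ∨
      (p = 1 ∧ 1 / (4 * p - 2) < liminf α atTop ∧ limsup α atTop < 1 ∧
        0 < liminf β atTop ∧
        limsup β atTop < (1 - limsup α atTop) / (1 - liminf α atTop)))) :
    ∀ ε : ℝ, 0 < ε →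
      Tendsto (fun n =>
        (∑' k : ℕ, ∫ ω in {ω | ε * Real.sqrt (derwssq μ p α S n) < |derwY μ p α S (n + k) ω|},
            derwY μ p α S (n + k) ω ^ 2 ∂μ) / derwssq μ p α S n) atTop (nhds 0) := by
  intro ε hε
  have hp : 3 / 4 < p := by
    rcases hcond with ⟨hp, -⟩ | ⟨hp, -⟩
    · exact hp
    · rw [hp]; norm_num
  have hαinf : 1 / (4 * p - 2) < liminf α atTop := by
    rcases hcond with ⟨-, -, hαinf⟩ | ⟨-, hαinf, -⟩ <;> exact hαinf
  have hαbdd : IsBoundedUnder (· ≥ ·) atTop α := isBoundedUnder_of ⟨0, fun n => (h.hα n).1⟩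
  obtain ⟨ℓ, hℓ, hℓα⟩ := exists_between hαinf
  have hθ : 1 / 2 < (2 * p - 1) * ℓ := by
    rw [div_lt_iff₀ (by linarith)] at hℓ
    linarith
  have hsum := summable_inv_derwa_sq (by linarith) h.hp.2 h.hα hθ
    ((eventually_lt_of_lt_liminf hℓα hαbdd).mono fun _ => le_of_lt)
  obtain ⟨c, hc, hgap⟩ : ∃ c > 0, ∀ᶠ m in atTop, derwDriftBound p α β m ≤ 1 - c := by
    rcases hcond with ⟨-, hp1, -⟩ | ⟨hp1, -, hαsup, hβinf, hβsup⟩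
    · exact exists_eventually_derwDriftBound_le_of_lt_one hp1 h.hα h.hβ
        ((one_div_pos.2 (by linarith)).trans hαinf)
    · have hαle := liminf_le_limsup (isBoundedUnder_of ⟨1, fun n => (h.hα n).2⟩) hαbdd
      exact exists_eventually_derwDriftBound_le_of_limsup_lt_one hp1.le h.hα h.hβ hαsup hβinf
        (hβsup.trans_le (div_le_one_of_le₀ (by linarith) (by linarith)))
  exact tendsto_lindeberg_ratio_of_abs_le μ (h.eventually_abs_derwY_le (by linarith))
    (h.tendsto_derwssq_div_sq (by linarith) hsum hc hgap) hε
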